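/- arXiv:1207.5347 — 3 statements merged into one kernel-verified Lean document; each statement's English description precedes it below -/
import Mathlib

section
/- Let A be a determinant of an n×n matrix, A_{ij} the minor obtained by deleting row i and column j, and A_{ip,jq} the second minor obtained by deleting rows i,p and columns j,q. Then A_{ij}·A_{pq} − A_{iq}·A_{pj} = A·A_{ip,jq} (the Jacobi/Desnanot identity for minors). -/
/-! Let `C` be the identity matrix with its columns `j, q` replaced by the columns `i, p` of
`adjugate A`. Then `A * C` is `A` with those columns replaced by `det A • eᵢ, det A • eₚ`, and
`det C` is the `2 × 2` minor of `adjugate A` in rows `j, q` and columns `i, p` (as a rank-two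
update of `1`, via `det (1 + U V) = det (1 + V U)`). Hence `det A` times that minor equals
`det A ^ 2` times the determinant of `A` with columns `j, q` replaced by `eᵢ, eₚ`. For the generic
matrix over `ℤ[X]` the factor `det A` cancels, and specialising gives the identity for every `A`.
Both sides are then expressed by cofactors, which carry the same sign `(-1) ^ (i + j + p + q)`. -/

namespace Matrix

section

variable {m R : Type*} [Fintype m] [DecidableEq m] [CommRing R]

theorem det_one_updateCol_updateCol {j q : m} (h : j ≠ q) (v w : m → R) :
    (((1 : Matrix m m R).updateCol j v).updateCol q w).det = v j * w q - v q * w j := by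
  let U : Matrix m (Fin 2) R :=
    of fun r => ![v r - (1 : Matrix m m R) r j, w r - (1 : Matrix m m R) r q]
  let V : Matrix (Fin 2) m R := of ![Pi.single j 1, Pi.single q 1]
  have hUV : ((1 : Matrix m m R).updateCol j v).updateCol q w = 1 + U * V := by
    ext r k
    by_cases hk : k = q <;> by_cases hk' : k = j <;>
      simp_all [U, V, mul_apply, Fin.sum_univ_two, one_apply]
  rw [hUV, det_one_add_mul_comm, det_fin_two]
  simp [U, V, one_apply, h, h.symm]
  ring

theorem mulVec_adjugate_col (A : Matrix m m R) (i : m) :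
    A *ᵥ A.adjugate.col i = A.det • Pi.single i 1 := by
  rw [← mulVec_single_one, mulVec_mulVec, mul_adjugate, smul_mulVec, one_mulVec]

theorem det_mul_adjugate_two_minor (A : Matrix m m R) {j q : m} (h : j ≠ q) (i p : m) :
    A.det * (A.adjugate j i * A.adjugate q p - A.adjugate q i * A.adjugate j p) =
      A.det * (A.det * ((A.updateCol j (Pi.single i 1)).updateCol q (Pi.single p 1)).det) := by
  let C := ((1 : Matrix m m R).updateCol j (A.adjugate.col i)).updateCol q (A.adjugate.col p)
  have hAC : A * C =
      (A.updateCol j (A.det • Pi.single i 1)).updateCol q (A.det • Pi.single p 1) := by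
    simp only [C, mul_updateCol, mul_one, mulVec_adjugate_col]
  have hC : C.det = A.adjugate j i * A.adjugate q p - A.adjugate q i * A.adjugate j p :=
    det_one_updateCol_updateCol h _ _
  rw [← hC, ← det_mul, hAC, det_updateCol_smul, updateCol_comm _ h,
    det_updateCol_smul, updateCol_comm _ h.symm]

theorem adjugate_two_minor (A : Matrix m m R) {j q : m} (h : j ≠ q) (i p : m) :
    A.adjugate j i * A.adjugate q p - A.adjugate q i * A.adjugate j p =
      A.det * ((A.updateCol j (Pi.single i 1)).updateCol q (Pi.single p 1)).det := by
  let X := mvPolynomialX m m ℤ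
  let f := MvPolynomial.aeval (R := ℤ) fun k : m × m => A k.1 k.2
  have hXA : X.map f = A := mvPolynomialX_mapMatrix_aeval ℤ A
  have hadj : ∀ a b, f (X.adjugate a b) = A.adjugate a b := fun a b => by
    rw [← hXA, ← AlgHom.mapMatrix_apply, ← AlgHom.map_adjugate]
    rfl
  have hsingle : ∀ k : m, f ∘ Pi.single k 1 = Pi.single k 1 := fun k => by
    ext r
    simp [Pi.single_apply, apply_ite f]
  have hX := mul_left_cancel₀ (det_mvPolynomialX_ne_zero m ℤ) (det_mul_adjugate_two_minor X h i p)
  simpa only [map_sub, map_mul, hadj, AlgHom.map_det, AlgHom.mapMatrix_apply, map_updateCol,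
    hsingle, hXA] using congrArg f hX

end

theorem submatrix_updateCol_single {l m n o α : Type*} [DecidableEq m] [DecidableEq n]
    [DecidableEq l] [DecidableEq o] [Zero α] {f : l → m} {g : o → n} (hf : f.Injective)
    (hg : g.Injective) (A : Matrix m n α) (a : l) (b : o) (x : α) :
    (A.updateCol (g b) (Pi.single (f a) x)).submatrix f g =
      (A.submatrix f g).updateCol b (Pi.single a x) := by
  ext r k
  simp [updateCol_apply, Pi.single_apply, hf.eq_iff, hg.eq_iff]

variable {R : Type*} [CommRing R] {n : ℕ}

theorem det_updateCol_single (A : Matrix (Fin (n + 1)) (Fin (n + 1)) R) (i j : Fin (n + 1)) :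
    (A.updateCol j (Pi.single i 1)).det =
      (-1) ^ (i + j : ℕ) * (A.submatrix i.succAbove j.succAbove).det := by
  rw [← cramer_apply, cramer_eq_adjugate_mulVec, mulVec_single_one, col_apply,
    adjugate_fin_succ_eq_det_submatrix]

theorem det_updateCol_single_updateCol_single (A : Matrix (Fin (n + 2)) (Fin (n + 2)) R)
    (p q : Fin (n + 2)) (i j : Fin (n + 1)) :
    ((A.updateCol (q.succAbove j) (Pi.single (p.succAbove i) 1)).updateCol q
        (Pi.single p 1)).det =
      (-1) ^ (p + q + (i + j) : ℕ) *
        ((A.submatrix p.succAbove q.succAbove).submatrix i.succAbove j.succAbove).det := by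
  rw [det_updateCol_single, submatrix_updateCol_single Fin.succAbove_right_injective
    Fin.succAbove_right_injective, det_updateCol_single, ← mul_assoc, ← pow_add]

end Matrix

open Matrix

/-- **Jacobi/Desnanot identity for minors.**  For an `(n+2) × (n+2)` matrix `A` over a
commutative ring, with rows `i < p` and columns `j < q`, the (unsigned) minors satisfy
`A_{ij}·A_{pq} − A_{iq}·A_{pj} = det A · A_{ip,jq}`, where `A_{ij}` deletes row `i` and
column `j`, and `A_{ip,jq}` deletes rows `i,p` and columns `j,q`. -/
theorem jacobi_desnanot_identity {R : Type*} [CommRing R] {n : ℕ}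
    (A : Matrix (Fin (n+2)) (Fin (n+2)) R)
    (i p j q : Fin (n+2)) (hip : i < p) (hjq : j < q) :
    (A.submatrix i.succAbove j.succAbove).det * (A.submatrix p.succAbove q.succAbove).det -
      (A.submatrix i.succAbove q.succAbove).det * (A.submatrix p.succAbove j.succAbove).det =
    A.det *
      ((A.submatrix p.succAbove q.succAbove).submatrix
        (Fin.succAbove ⟨i.1, by omega⟩) (Fin.succAbove ⟨j.1, by omega⟩)).det := by
  have hi : p.succAbove ⟨i.1, by omega⟩ = i := Fin.succAbove_castPred_of_lt _ _ hip
  have hj : q.succAbove ⟨j.1, by omega⟩ = j := Fin.succAbove_castPred_of_lt _ _ hjq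
  have hcofactor := det_updateCol_single_updateCol_single A p q ⟨i.1, by omega⟩ ⟨j.1, by omega⟩
  rw [hi, hj] at hcofactor
  have hminor := adjugate_two_minor A hjq.ne i p
  simp only [adjugate_fin_succ_eq_det_submatrix, hcofactor] at hminor
  refine (isUnit_neg_one.pow (i + j + (p + q) : ℕ)).mul_left_cancel ?_
  linear_combination hminor
end

section
/- For a skew-symmetric matrix A of even order n, and indices r≠s, the minor A_{rs} (obtained by deleting row r and column s) satisfies A_{rs}² = det(A)·det(A_{rs,rs}), where A_{rs,rs} is the submatrix obtained by deleting rows r,s and columns r,s. -/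
/-!
Jacobi's theorem on complementary minors gives
`adj(A)ᵣᵣ adj(A)ₛₛ - adj(A)ᵣₛ adj(A)ₛᵣ = det A · det A_{rs,rs}` for every square `A`:
multiplying `A` by the identity matrix whose columns `r, s` are replaced by those of `adj A`
yields `A` with columns `r, s` replaced by `det A • eᵣ, det A • eₛ`; taking determinants proves
the identity times `det A`, and `det A` cancels for the generic matrix over `ℤ[xᵢⱼ]`.

For `A` alternating of even order, `adj A` is alternating too: its transpose is
`adj (-A) = -adj A`, and its diagonal vanishes because it does so for the generic alternating
matrix, over which `x = -x` forces `x = 0`. Hence the left-hand side is `adj(A)ₛᵣ²`, the square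
of the minor `A_{rs}` up to sign.
-/

namespace Matrix

variable {n R : Type*} [CommRing R]

theorem exists_ringHom_map_eq_of_transpose_eq_neg {A : Matrix n n R} (hA : Aᵀ = -A)
    (hdiag : ∀ i, A i i = 0) :
    ∃ f : MvPolynomial (n × n) ℤ →+* R,
      (mvPolynomialX n n ℤ - (mvPolynomialX n n ℤ)ᵀ).map f = A := by
  let _ : LinearOrder n := IsWellOrder.linearOrder WellOrderingRel
  refine ⟨MvPolynomial.eval₂Hom (Int.castRingHom R)
    fun p => if p.1 < p.2 then A p.1 p.2 else 0, ?_⟩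
  ext i j
  simp only [map_apply, sub_apply, transpose_apply, mvPolynomialX_apply, map_sub,
    MvPolynomial.eval₂Hom_X']
  rcases lt_trichotomy i j with h | rfl | h
  · simp [h, h.not_gt]
  · simp [hdiag]
  · simpa [h, h.not_gt] using (congrFun₂ hA j i).symm

variable [Fintype n] [DecidableEq n]

theorem det_updateCol_updateCol_one {r s : n} (hrs : r ≠ s) (u v : n → R) :
    (((1 : Matrix n n R).updateCol r u).updateCol s v).det = u r * v s - u s * v r := by
  let U : Matrix n (Fin 2) R :=
    of fun i => ![u i - (Pi.single r 1 : n → R) i, v i - (Pi.single s 1 : n → R) i]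
  let V : Matrix (Fin 2) n R := of ![Pi.single r 1, Pi.single s 1]
  have hUV : ((1 : Matrix n n R).updateCol r u).updateCol s v = 1 + U * V := by
    ext i j
    rcases eq_or_ne j s with rfl | hjs
    · simp [U, V, mul_apply, Fin.sum_univ_two, Pi.single_apply, hrs, one_apply]
    rcases eq_or_ne j r with rfl | hjr
    · simp [U, V, mul_apply, Fin.sum_univ_two, Pi.single_apply, hjs, one_apply]
    · simp [U, V, mul_apply, Fin.sum_univ_two, Pi.single_apply, hjs, hjr]
  rw [hUV, det_one_add_mul_comm, det_fin_two]
  simp [U, V, hrs, hrs.symm]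
  ring

theorem det_updateCol_single_updateCol_single_s1 {r s : n} (hrs : r ≠ s) (A : Matrix n n R) :
    ((A.updateCol r (Pi.single r 1)).updateCol s (Pi.single s 1)).det =
      (A.submatrix (fun k : {k // k ≠ r ∧ k ≠ s} => k.val)
        (fun k : {k // k ≠ r ∧ k ≠ s} => k.val)).det := by
  set M := (A.updateCol r (Pi.single r 1)).updateCol s (Pi.single s 1)
  have hcol : ∀ i j, ¬(j ≠ r ∧ j ≠ s) → M i j = (1 : Matrix n n R) i j := by
    intro i j hj
    rcases not_and_or.mp hj with hj | hj <;> rw [not_not] at hj <;> subst hj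
    · simp [M, hrs, Pi.single_apply, one_apply]
    · simp [M, Pi.single_apply, one_apply]
  rw [twoBlockTriangular_det' M (fun k => k ≠ r ∧ k ≠ s)]
  · have hP : toSquareBlockProp M (fun k => ¬(k ≠ r ∧ k ≠ s)) = 1 := by
      ext i j
      exact (hcol i j j.2).trans (by simp [one_apply, Subtype.ext_iff])
    rw [hP, det_one, mul_one]
    congr 1
    ext i j
    simp [M, toSquareBlockProp, toBlock, j.2.1, j.2.2]
  · intro i hi j hj
    rw [hcol i j hj, one_apply_ne]
    rintro rfl
    exact hj hi

theorem det_mul_jacobi_complementary_minor_two {r s : n} (hrs : r ≠ s) (A : Matrix n n R) :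
    A.det * (adjugate A r r * adjugate A s s - adjugate A r s * adjugate A s r) =
      A.det * (A.det * (A.submatrix (fun k : {k // k ≠ r ∧ k ≠ s} => k.val)
        (fun k : {k // k ≠ r ∧ k ≠ s} => k.val)).det) := by
  let D := ((1 : Matrix n n R).updateCol r (cramer A (Pi.single r 1))).updateCol s
    (cramer A (Pi.single s 1))
  have hD : D.det = adjugate A r r * adjugate A s s - adjugate A r s * adjugate A s r := by
    rw [det_updateCol_updateCol_one hrs]
    simp only [cramer_eq_adjugate_mulVec, mulVec_single_one, col_apply]
    ring
  have hAD : A * D = (A.updateCol r (A.det • Pi.single r 1)).updateCol s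
      (A.det • Pi.single s 1) := by
    simp only [D, mul_updateCol, mul_one, mulVec_cramer]
  rw [← hD, ← det_mul, hAD, det_updateCol_smul, updateCol_comm _ hrs, det_updateCol_smul,
    updateCol_comm _ hrs.symm, det_updateCol_single_updateCol_single_s1 hrs]

theorem jacobi_complementary_minor_two {r s : n} (hrs : r ≠ s) (A : Matrix n n R) :
    adjugate A r r * adjugate A s s - adjugate A r s * adjugate A s r =
      A.det * (A.submatrix (fun k : {k // k ≠ r ∧ k ≠ s} => k.val)
        (fun k : {k // k ≠ r ∧ k ≠ s} => k.val)).det := by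
  let X := mvPolynomialX n n ℤ
  have hX := mul_left_cancel₀ (det_mvPolynomialX_ne_zero n ℤ)
    (det_mul_jacobi_complementary_minor_two hrs X)
  obtain ⟨f, rfl⟩ : ∃ f : MvPolynomial (n × n) ℤ →+* R, f.mapMatrix X = A :=
    ⟨MvPolynomial.eval₂Hom (Int.castRingHom R) _, mvPolynomialX_map_eval₂ _ A⟩
  rw [← RingHom.map_adjugate]
  simpa only [map_sub, map_mul, RingHom.map_det, RingHom.mapMatrix_apply, map_apply,
    submatrix_map] using congrArg f hX

theorem adjugate_transpose_eq_neg_of_even [Nonempty n] (hn : Even (Fintype.card n))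
    {A : Matrix n n R} (hA : Aᵀ = -A) : (adjugate A)ᵀ = -adjugate A := by
  have hodd : Odd (Fintype.card n - 1) := Nat.Even.sub_odd Fintype.card_pos hn odd_one
  rw [adjugate_transpose, hA, ← neg_one_smul R A, adjugate_smul, hodd.neg_one_pow, neg_one_smul]

theorem adjugate_apply_self_eq_zero_of_even [Nonempty n] (hn : Even (Fintype.card n))
    {A : Matrix n n R} (hA : Aᵀ = -A) (hdiag : ∀ i, A i i = 0) (i : n) :
    adjugate A i i = 0 := by
  obtain ⟨f, rfl⟩ := exists_ringHom_map_eq_of_transpose_eq_neg hA hdiag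
  set Y := mvPolynomialX n n ℤ - (mvPolynomialX n n ℤ)ᵀ
  have hY : Yᵀ = -Y := by simp [Y]
  have hYii : adjugate Y i i = 0 :=
    CharZero.eq_neg_self_iff.mp (congrFun₂ (adjugate_transpose_eq_neg_of_even hn hY) i i)
  rw [← RingHom.mapMatrix_apply, ← RingHom.map_adjugate]
  simp [hYii]

end Matrix

open Matrix

/-- For a skew-symmetric matrix `A` of even order `2N+2` and indices `r ≠ s`, the minor
`A_{rs}` (delete row `r` and column `s`) satisfies `A_{rs}² = det A · det A_{rs,rs}`,
where `A_{rs,rs}` deletes rows `r,s` and columns `r,s`. -/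
theorem skew_minor_sq_eq_det_mul_det {R : Type*} [CommRing R] {N : ℕ}
    (A : Matrix (Fin (2*N+2)) (Fin (2*N+2)) R)
    (hA : Aᵀ = -A) (hdiag : ∀ i, A i i = 0)
    (r s : Fin (2*N+2)) (hrs : r ≠ s) :
    ((A.submatrix r.succAbove s.succAbove).det) ^ 2 =
      A.det *
        (A.submatrix (fun k : {k : Fin (2*N+2) // k ≠ r ∧ k ≠ s} => k.val)
                     (fun k : {k : Fin (2*N+2) // k ≠ r ∧ k ≠ s} => k.val)).det := by
  have hn : Even (Fintype.card (Fin (2*N+2))) := ⟨N + 1, by rw [Fintype.card_fin]; ring⟩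
  have hadj_skew : adjugate A r s = -adjugate A s r :=
    congrFun₂ (adjugate_transpose_eq_neg_of_even hn hA) s r
  have hsign : ((-1 : R) ^ ((r : ℕ) + s)) ^ 2 = 1 := by
    rw [← pow_mul, pow_mul', neg_one_sq, one_pow]
  rw [← jacobi_complementary_minor_two hrs A, adjugate_apply_self_eq_zero_of_even hn hA hdiag r,
    adjugate_apply_self_eq_zero_of_even hn hA hdiag s, hadj_skew,
    adjugate_fin_succ_eq_det_submatrix A s r]
  linear_combination (-(A.submatrix r.succAbove s.succAbove).det ^ 2) * hsign
end

section
/- Hodograph derivation of the DP-type equation: suppose smooth functions ρ(x₁,x₋₁) > 0 and u(x₁,x₋₁) satisfy (ln ρ)_{x₋₁} = −ρ·u_{x₁} and ρ³ = 1 + u − ρ(ρ u_{x₁})_{x₁}. Define new coordinates by ∂x/∂x₁ = ρ^{−1}, ∂x/∂x₋₁ = u, t = x₋₁, so that ∂_{x₁} = ρ^{−1}∂_x and ∂_{x₋₁} = ∂_t + u∂_x. Then in the (x,t) variables, m := 1 + u − u_{xx} satisfies m_t + u m_x + 3 u_x m = 0, i.e., u satisfies the Degasperis–Procesi equation u_t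 + 3u_x − u_{txx} + 4uu_x = 3u_x u_{xx} + u u_{xxx}. -/
/-- **Hodograph derivation of the DP-type equation.** Suppose smooth real functions
`u(x,t)` and `ρ(x,t) > 0` (expressed in the hodograph variables `(x, t)`, where
`∂_{x₁} = ρ⁻¹ ∂_x` and `∂_{x₋₁} = ∂_t + u ∂_x`) satisfy the transformed relations
`(∂_t + u ∂_x)(ln ρ) = −u_x` (i.e. `(ln ρ)_{x₋₁} = −ρ u_{x₁}`) and
`ρ³ = 1 + u − u_{xx}` (i.e. `ρ³ = 1 + u − ρ(ρ u_{x₁})_{x₁}`). Then `m := 1 + u − u_{xx}`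
satisfies `m_t + u m_x + 3 u_x m = 0`, i.e. `u` satisfies the Degasperis–Procesi equation
`u_t + 3u_x − u_{txx} + 4uu_x = 3u_x u_{xx} + u u_{xxx}`. -/
theorem hodograph_DP_derivation (u ρ : ℝ → ℝ → ℝ)
    (hu : ContDiff ℝ (⊤ : ℕ∞) (fun q : ℝ × ℝ => u q.1 q.2))
    (hρ : ContDiff ℝ (⊤ : ℕ∞) (fun q : ℝ × ℝ => ρ q.1 q.2))
    (hρpos : ∀ x t, 0 < ρ x t)
    (h1 : ∀ x t, deriv (fun s => Real.log (ρ x s)) t +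
        u x t * deriv (fun y => Real.log (ρ y t)) x = -(deriv (fun y => u y t) x))
    (h2 : ∀ x t, (ρ x t) ^ 3 = 1 + u x t - deriv (deriv (fun y => u y t)) x) :
    ∀ x t,
      deriv (fun s => 1 + u x s - deriv (deriv (fun y => u y s)) x) t +
          u x t * deriv (fun y => 1 + u y t - deriv (deriv (fun z => u z t)) y) x =
        -3 * deriv (fun y => u y t) x *
          (1 + u x t - deriv (deriv (fun y => u y t)) x) := by
  intro x t
  have hρd : Differentiable ℝ (fun q : ℝ × ℝ => ρ q.1 q.2) := hρ.differentiable (by simp)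
  -- partial derivatives of ρ
  have hdt : HasDerivAt (fun s => ρ x s) (deriv (fun s => ρ x s) t) t := by
    have : Differentiable ℝ (fun s : ℝ => ρ x s) :=
      hρd.comp ((differentiable_const x).prodMk differentiable_id)
    exact (this t).hasDerivAt
  have hdx : HasDerivAt (fun y => ρ y t) (deriv (fun y => ρ y t) x) x := by
    have : Differentiable ℝ (fun y : ℝ => ρ y t) :=
      hρd.comp (differentiable_id.prodMk (differentiable_const t))
    exact (this x).hasDerivAt
  set ρt := deriv (fun s => ρ x s) t
  set ρx := deriv (fun y => ρ y t) x
  set ux := deriv (fun y => u y t) x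
  have hne : ρ x t ≠ 0 := (hρpos x t).ne'
  -- log derivatives
  have hlogt : deriv (fun s => Real.log (ρ x s)) t = ρt / ρ x t :=
    (hdt.log hne).deriv
  have hlogx : deriv (fun y => Real.log (ρ y t)) x = ρx / ρ x t :=
    (hdx.log hne).deriv
  have key : ρt + u x t * ρx = -(ux) * ρ x t := by
    have := h1 x t
    rw [hlogt, hlogx] at this
    field_simp at this
    linarith
  -- rewrite m as ρ^3
  have e1 : (fun s => 1 + u x s - deriv (deriv (fun y => u y s)) x) =
      fun s => ρ x s ^ 3 := funext fun s => (h2 x s).symm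
  have e2 : (fun y => 1 + u y t - deriv (deriv (fun z => u z t)) y) =
      fun y => ρ y t ^ 3 := funext fun y => (h2 y t).symm
  rw [e1, e2, ← h2 x t]
  have d1 : deriv (fun s => ρ x s ^ 3) t = 3 * ρ x t ^ 2 * ρt := by
    have := (hdt.fun_pow 3).deriv
    simpa using this
  have d2 : deriv (fun y => ρ y t ^ 3) x = 3 * ρ x t ^ 2 * ρx := by
    have := (hdx.fun_pow 3).deriv
    simpa using this
  rw [d1, d2]
  nlinarith [key, sq_nonneg (ρ x t)]
end
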